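/- For every positive integer n, 2 * Σ_{k=0}^{n-1} 4^(n-1-k) Σ_{j=0}^k binom(2j,j) binom(2k-2j,k-j) (6j+1)(6k-6j+1) = 4^(n-1) * n * (3n^2 - 3n + 2). -/

import Mathlib

/-!
Write `c i` for the central binomial coefficient `(2i choose i)` and expand
`(6i + 1)(6j + 1) = 36 ij + 6(i + j) + 1`. Over the antidiagonal `i + j = k` the inner sum becomes
`36 D_k + (6k + 1) A_k` with `A_k = ∑ c_i c_j` and `D_k = ∑ i j c_i c_j`. The recurrence
`(i + 1) c_{i+1} = 2 (2i + 1) c_i` shifts a weight `i c_i` from the antidiagonal `k + 1` down to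
the antidiagonal `k`; applying it once to each factor gives `A_{k+1} = 4 A_k` and
`2 D_{k+1} = 8 D_k + 2k A_k`, hence `A_k = 4^k` and `8 D_k = k (k - 1) 4^k`. The inner sum is thus
`4^k (9k² + 3k + 2) / 2`, and summing this polynomial over `k < n` telescopes.
-/

open Finset Nat

section CentralBinomConvolution

variable {R : Type*} [CommSemiring R]

theorem sum_antidiagonal_succ_fst_mul_centralBinom (k : ℕ) (f : ℕ → R) :
    ∑ p ∈ antidiagonal (k + 1), (p.1 * centralBinom p.1 : R) * f p.2 =
      ∑ p ∈ antidiagonal k, (2 * (2 * p.1 + 1) * centralBinom p.1 : R) * f p.2 := by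
  rw [Nat.sum_antidiagonal_succ, Nat.cast_zero, zero_mul, zero_mul, zero_add]
  refine sum_congr rfl fun p _ => ?_
  exact_mod_cast congrArg (fun m : ℕ => (m : R) * f p.2) (succ_mul_centralBinom_succ p.1)

theorem sum_antidiagonal_succ_snd_mul_centralBinom (k : ℕ) (f : ℕ → R) :
    ∑ p ∈ antidiagonal (k + 1), f p.1 * (p.2 * centralBinom p.2 : R) =
      ∑ p ∈ antidiagonal k, f p.1 * (2 * (2 * p.2 + 1) * centralBinom p.2 : R) := by
  rw [Nat.sum_antidiagonal_succ', Nat.cast_zero, zero_mul, mul_zero, zero_add]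
  refine sum_congr rfl fun p _ => ?_
  exact_mod_cast congrArg (fun m : ℕ => f p.1 * (m : R)) (succ_mul_centralBinom_succ p.2)

end CentralBinomConvolution

theorem sum_antidiagonal_centralBinom_mul_centralBinom (k : ℕ) :
    ∑ p ∈ antidiagonal k, centralBinom p.1 * centralBinom p.2 = 4 ^ k := by
  induction k with
  | zero => simp
  | succ k ih =>
    refine Nat.eq_of_mul_eq_mul_left k.succ_pos ?_
    calc (k + 1) * ∑ p ∈ antidiagonal (k + 1), centralBinom p.1 * centralBinom p.2
        = ∑ p ∈ antidiagonal (k + 1), p.1 * centralBinom p.1 * centralBinom p.2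
          + ∑ p ∈ antidiagonal (k + 1), centralBinom p.1 * (p.2 * centralBinom p.2) := by
          rw [mul_sum, ← sum_add_distrib]
          refine sum_congr rfl fun p hp => ?_
          rw [← mem_antidiagonal.mp hp]
          ring
      _ = ∑ p ∈ antidiagonal k, 2 * (2 * p.1 + 1) * centralBinom p.1 * centralBinom p.2
          + ∑ p ∈ antidiagonal k, centralBinom p.1 * (2 * (2 * p.2 + 1) * centralBinom p.2) := by
          simpa using congrArg₂ (· + ·)
            (sum_antidiagonal_succ_fst_mul_centralBinom (R := ℕ) k centralBinom)
            (sum_antidiagonal_succ_snd_mul_centralBinom (R := ℕ) k centralBinom)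
      _ = 4 * (k + 1) * ∑ p ∈ antidiagonal k, centralBinom p.1 * centralBinom p.2 := by
          rw [mul_sum, ← sum_add_distrib]
          refine sum_congr rfl fun p hp => ?_
          rw [← mem_antidiagonal.mp hp]
          ring
      _ = (k + 1) * 4 ^ (k + 1) := by rw [ih]; ring

theorem eight_mul_sum_antidiagonal_mul_mul_centralBinom (k : ℕ) :
    8 * ∑ p ∈ antidiagonal k, (p.1 * p.2 * centralBinom p.1 * centralBinom p.2 : ℤ) =
      k * (k - 1) * 4 ^ k := by
  induction k with
  | zero => simp
  | succ k ih =>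
    have hA : ∑ p ∈ antidiagonal k, (centralBinom p.1 * centralBinom p.2 : ℤ) = 4 ^ k := by
      exact_mod_cast sum_antidiagonal_centralBinom_mul_centralBinom k
    have hD : 2 * ∑ p ∈ antidiagonal (k + 1), (p.1 * p.2 * centralBinom p.1 * centralBinom p.2 : ℤ)
        = 8 * ∑ p ∈ antidiagonal k, (p.1 * p.2 * centralBinom p.1 * centralBinom p.2 : ℤ)
          + 2 * k * ∑ p ∈ antidiagonal k, (centralBinom p.1 * centralBinom p.2 : ℤ) := by
      calc 2 * ∑ p ∈ antidiagonal (k + 1), (p.1 * p.2 * centralBinom p.1 * centralBinom p.2 : ℤ)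
          = ∑ p ∈ antidiagonal (k + 1), (p.1 * centralBinom p.1 : ℤ) * (p.2 * centralBinom p.2)
            + ∑ p ∈ antidiagonal (k + 1), (p.1 * centralBinom p.1 : ℤ) * (p.2 * centralBinom p.2) := by
            rw [two_mul]
            congr 1 <;> exact sum_congr rfl fun p _ => by ring
        _ = ∑ p ∈ antidiagonal k, (2 * (2 * p.1 + 1) * centralBinom p.1 : ℤ) * (p.2 * centralBinom p.2)
            + ∑ p ∈ antidiagonal k, (p.1 * centralBinom p.1 : ℤ) * (2 * (2 * p.2 + 1) * centralBinom p.2) := by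
            exact congrArg₂ (· + ·)
              (sum_antidiagonal_succ_fst_mul_centralBinom k fun j => (j * centralBinom j : ℤ))
              (sum_antidiagonal_succ_snd_mul_centralBinom k fun i => (i * centralBinom i : ℤ))
        _ = _ := by
            rw [mul_sum, mul_sum, ← sum_add_distrib, ← sum_add_distrib]
            refine sum_congr rfl fun p hp => ?_
            rw [← mem_antidiagonal.mp hp]
            push_cast
            ring
    rw [hA] at hD
    push_cast
    linear_combination 4 * hD + 4 * ih

theorem two_mul_sum_range_centralBinom_mul_six_mul_add_one (k : ℕ) :
    2 * ∑ j ∈ range (k + 1),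
        ((2 * j).choose j : ℤ) * (2 * (k - j)).choose (k - j) * (6 * j + 1) * (6 * (k - j : ℕ) + 1)
      = 4 ^ k * (9 * (k : ℤ) ^ 2 + 3 * k + 2) := by
  have hA : ∑ p ∈ antidiagonal k, (centralBinom p.1 * centralBinom p.2 : ℤ) = 4 ^ k := by
    exact_mod_cast sum_antidiagonal_centralBinom_mul_centralBinom k
  have hsplit : ∑ j ∈ range (k + 1),
        ((2 * j).choose j : ℤ) * (2 * (k - j)).choose (k - j) * (6 * j + 1) * (6 * (k - j : ℕ) + 1)
      = 36 * ∑ p ∈ antidiagonal k, (p.1 * p.2 * centralBinom p.1 * centralBinom p.2 : ℤ)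
        + (6 * k + 1) * ∑ p ∈ antidiagonal k, (centralBinom p.1 * centralBinom p.2 : ℤ) := by
    rw [← Nat.sum_antidiagonal_eq_sum_range_succ (fun i j =>
      ((2 * i).choose i : ℤ) * (2 * j).choose j * (6 * i + 1) * (6 * j + 1)), mul_sum, mul_sum,
      ← sum_add_distrib]
    refine sum_congr rfl fun p hp => ?_
    rw [← mem_antidiagonal.mp hp, centralBinom_eq_two_mul_choose, centralBinom_eq_two_mul_choose]
    push_cast
    ring
  rw [hsplit, hA]
  linear_combination 9 * eight_mul_sum_antidiagonal_mul_mul_centralBinom k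

theorem sum_range_nine_mul_sq_add_three_mul_add_two (n : ℕ) :
    ∑ k ∈ range n, (9 * (k : ℤ) ^ 2 + 3 * k + 2) = n * (3 * (n : ℤ) ^ 2 - 3 * n + 2) := by
  induction n with
  | zero => simp
  | succ n ih =>
    rw [sum_range_succ, ih]
    push_cast
    ring

theorem stmt_14_general (n : ℕ) :
    2 * ∑ k ∈ Finset.range n, (4 : ℤ) ^ (n - 1 - k) *
      ∑ j ∈ Finset.range (k + 1),
        ((2 * j).choose j : ℤ) * (2 * (k - j)).choose (k - j) * (6 * j + 1) * (6 * (k - j : ℕ) + 1)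
      = 4 ^ (n - 1) * n * (3 * (n : ℤ) ^ 2 - 3 * n + 2) := by
  have hterm : ∀ k ∈ range n,
      2 * ((4 : ℤ) ^ (n - 1 - k) * ∑ j ∈ range (k + 1),
        ((2 * j).choose j : ℤ) * (2 * (k - j)).choose (k - j) * (6 * j + 1) * (6 * (k - j : ℕ) + 1))
      = 4 ^ (n - 1) * (9 * (k : ℤ) ^ 2 + 3 * k + 2) := by
    intro k hk
    rw [mul_left_comm, two_mul_sum_range_centralBinom_mul_six_mul_add_one, ← mul_assoc, ← pow_add,
      Nat.sub_add_cancel (Nat.le_sub_one_of_lt (mem_range.mp hk))]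
  rw [mul_sum, sum_congr rfl hterm, ← mul_sum, sum_range_nine_mul_sq_add_three_mul_add_two, mul_assoc]

theorem stmt_14 (n : ℕ) (hn : 0 < n) :
    2 * ∑ k ∈ Finset.range n, (4 : ℤ) ^ (n - 1 - k) *
      ∑ j ∈ Finset.range (k + 1),
        ((2 * j).choose j : ℤ) * (2 * (k - j)).choose (k - j) * (6 * j + 1) * (6 * (k - j : ℕ) + 1)
      = 4 ^ (n - 1) * n * (3 * (n : ℤ) ^ 2 - 3 * n + 2) :=
  stmt_14_general n
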